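/- arXiv:2303.17721 — 3 statements merged into one kernel-verified Lean document; each statement's English description precedes it below -/
import Mathlib

section
/- Let n ≥ 1 be an integer. There exists a constant C > 0 such that for every f ∈ L^1(ℝ^n) and every λ > 0, vol{ x ∈ ℝ^n : M^{exp,∇}f(x) > λ } ≤ C ‖f‖_{L^1} / λ. That is, the vertical heat maximal operator M^{exp,∇} is of weak type (1,1) on ℝ^n. -/
open MeasureTheory Metric
open scoped ENNReal NNReal

/-- The Gaussian heat kernel `K_t(x) = (4πt)^{-n/2} exp(-‖x‖²/(4t))` on `ℝ^n`. -/
noncomputable def heatKernel (n : ℕ) (t : ℝ) (x : EuclideanSpace ℝ (Fin n)) : ℝ :=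
  (4 * Real.pi * t) ^ (-(n : ℝ) / 2) * Real.exp (-‖x‖ ^ 2 / (4 * t))

/-- The gradient of the Gaussian heat kernel, `∇K_t(x) = -(x/(2t)) K_t(x)`. -/
noncomputable def gradHeatKernel (n : ℕ) (t : ℝ) (x : EuclideanSpace ℝ (Fin n)) :
    EuclideanSpace ℝ (Fin n) :=
  (-(1 / (2 * t)) * heatKernel n t x) • x

/-- The vertical heat maximal function
`M^{exp,∇} f (x) = sup_{t>0} √t ‖∫ ∇K_t(x-y) f(y) dy‖` (valued in `ℝ≥0∞`). -/
noncomputable def vertHeatMax (n : ℕ) (f : EuclideanSpace ℝ (Fin n) → ℝ)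
    (x : EuclideanSpace ℝ (Fin n)) : ℝ≥0∞ :=
  ⨆ (t : ℝ) (_ : 0 < t),
    ENNReal.ofReal (Real.sqrt t * ‖∫ y, f y • gradHeatKernel n t (x - y)‖)

/-!
Writing `s = ‖z‖ / √t`, one has `√t ‖∇K_t(z)‖ ≤ t^{-n/2} · s e^{-s²/4}`, and the Gaussian factor
beats every power of `s`. Hence on the `k`-th dyadic annulus `2^{k-1}√t < ‖z‖ ≤ 2^k √t` the kernel
`√t ‖∇K_t‖` is at most `2^{-k}` times a dimensional constant divided by the volume of the ball of
radius `2^k √t`. Summing over `k` dominates `M^{exp,∇} f(x)` by a constant times the centred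
Hardy–Littlewood maximal function of `|f|` at `x`, and the latter is of weak type `(1,1)` by the
Vitali covering lemma with enlargement factor `4`.
-/

open scoped Nat

section Dyadic

variable {α : Type*} [PseudoMetricSpace α] {x : α} {ρ : ℝ} {a : ℕ → ℝ≥0∞} {h : α → ℝ≥0∞}

-- Together with `dist y x ≤ 2 ^ k * ρ`, the condition `k = 0 ∨ 2 ^ k * ρ < 2 * dist y x` says
-- that `y` lies in the `k`-th dyadic annulus around `x`.
lemma le_tsum_indicator_closedBall_of_dyadic (hρ : 0 < ρ)
    (hh : ∀ y k, dist y x ≤ 2 ^ k * ρ → (k = 0 ∨ 2 ^ k * ρ < 2 * dist y x) → h y ≤ a k)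
    (y : α) :
    h y ≤ ∑' k, (closedBall x (2 ^ k * ρ)).indicator (fun _ => a k) y := by
  classical
  have hex : ∃ k : ℕ, dist y x ≤ 2 ^ k * ρ := by
    obtain ⟨k, hk⟩ := pow_unbounded_of_one_lt (dist y x / ρ) one_lt_two
    exact ⟨k, ((div_lt_iff₀ hρ).1 hk).le⟩
  have hmin : Nat.find hex = 0 ∨ 2 ^ Nat.find hex * ρ < 2 * dist y x := by
    refine or_iff_not_imp_left.2 fun h0 => ?_
    obtain ⟨j, hj⟩ := Nat.exists_eq_succ_of_ne_zero h0
    have hj_lt : ¬ dist y x ≤ 2 ^ j * ρ := Nat.find_min hex (by omega)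
    rw [hj, pow_succ]
    linarith
  calc h y ≤ a (Nat.find hex) := hh y _ (Nat.find_spec hex) hmin
    _ = (closedBall x (2 ^ Nat.find hex * ρ)).indicator (fun _ => a (Nat.find hex)) y :=
        (Set.indicator_of_mem (mem_closedBall.2 (Nat.find_spec hex)) (fun _ => _)).symm
    _ ≤ ∑' k, (closedBall x (2 ^ k * ρ)).indicator (fun _ => a k) y := ENNReal.le_tsum _

lemma lintegral_mul_le_of_dyadic [MeasurableSpace α] [OpensMeasurableSpace α] {μ : Measure α}
    {F : α → ℝ≥0∞} (hF : AEMeasurable F μ) (hρ : 0 < ρ)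
    (hh : ∀ y k, dist y x ≤ 2 ^ k * ρ → (k = 0 ∨ 2 ^ k * ρ < 2 * dist y x) → h y ≤ a k)
    {A : ℝ≥0∞}
    (hA : ∀ k : ℕ, ∫⁻ y in closedBall x (2 ^ k * ρ), F y ∂μ ≤ A * μ (closedBall x (2 ^ k * ρ))) :
    ∫⁻ y, F y * h y ∂μ ≤ A * ∑' k, a k * μ (closedBall x (2 ^ k * ρ)) := by
  have hF_indicator : ∀ k, (fun y => F y * (closedBall x (2 ^ k * ρ)).indicator (fun _ => a k) y)
      = (closedBall x (2 ^ k * ρ)).indicator (fun y => F y * a k) := fun k => by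
    ext y
    exact (Set.indicator_mul_right _ F _).symm
  calc ∫⁻ y, F y * h y ∂μ
      ≤ ∫⁻ y, ∑' k, F y * (closedBall x (2 ^ k * ρ)).indicator (fun _ => a k) y ∂μ := by
        refine lintegral_mono fun y => ?_
        rw [ENNReal.tsum_mul_left]
        exact mul_le_mul_right (le_tsum_indicator_closedBall_of_dyadic hρ hh y) _
    _ = ∑' k, a k * ∫⁻ y in closedBall x (2 ^ k * ρ), F y ∂μ := by
        rw [lintegral_tsum fun k => ?_]
        · refine tsum_congr fun k => ?_
          rw [hF_indicator, lintegral_indicator measurableSet_closedBall,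
            lintegral_mul_const'' _ hF.restrict, mul_comm]
        · rw [hF_indicator]
          exact (hF.mul_const _).indicator measurableSet_closedBall
    _ ≤ ∑' k, a k * (A * μ (closedBall x (2 ^ k * ρ))) := by gcongr with k; exact hA k
    _ = A * ∑' k, a k * μ (closedBall x (2 ^ k * ρ)) := by
        rw [← ENNReal.tsum_mul_left]
        simp only [mul_left_comm]

end Dyadic

section WeakType

variable {E : Type*} [NormedAddCommGroup E] [NormedSpace ℝ E] [FiniteDimensional ℝ E]
  [Nontrivial E] [MeasurableSpace E] [BorelSpace E] (μ : Measure E) [μ.IsAddHaarMeasure]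

lemma exists_radius_le_of_addHaar_closedBall_le {M : ℝ≥0∞} (hM : M ≠ ∞) :
    ∃ R, ∀ x r, μ (closedBall x r) ≤ M → r ≤ R := by
  set vB := μ (ball (0 : E) 1)
  have hvB : vB ≠ 0 := (measure_ball_pos μ _ one_pos).ne'
  refine ⟨max 1 (M / vB).toReal, fun x r hr => ?_⟩
  by_contra! hR
  have hr1 : 1 < r := (le_max_left _ _).trans_lt hR
  refine hr.not_gt ?_
  calc M = ENNReal.ofReal (M / vB).toReal * vB := by
        rw [ENNReal.ofReal_toReal (ENNReal.div_ne_top hM hvB),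
          ENNReal.div_mul_cancel hvB measure_ball_lt_top.ne]
    _ < ENNReal.ofReal (r ^ Module.finrank ℝ E) * vB := by
        gcongr
        · exact measure_ball_lt_top.ne
        · exact (ENNReal.ofReal_lt_ofReal_iff (by positivity)).2
            ((le_max_right _ _).trans_lt (hR.trans_le (le_self_pow₀ hr1.le Module.finrank_pos.ne')))
    _ = μ (closedBall x r) := (Measure.addHaar_closedBall μ x (by linarith)).symm

theorem addHaar_setOf_exists_mul_lt_le (ν : Measure E) [IsFiniteMeasure ν] {c : ℝ≥0∞}
    (hc : c ≠ 0) :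
    μ {x | ∃ r > 0, c * μ (closedBall x r) < ν (closedBall x r)}
      ≤ 4 ^ Module.finrank ℝ E * ν Set.univ / c := by
  set S := {x | ∃ r > 0, c * μ (closedBall x r) < ν (closedBall x r)}
  choose! r hr0 hr using fun x (hx : x ∈ S) => hx
  have hball : ∀ x ∈ S, μ (closedBall x (r x)) ≤ ν (closedBall x (r x)) / c := fun x hx =>
    (ENNReal.le_div_iff_mul_le (.inl hc) (.inr (measure_ne_top ν _))).2
      (mul_comm c _ ▸ (hr x hx).le)
  obtain ⟨R, hR⟩ :=
    exists_radius_le_of_addHaar_closedBall_le μ (ENNReal.div_ne_top (measure_ne_top ν Set.univ) hc)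
  obtain ⟨u, huS, hdisj, hcov⟩ := Vitali.exists_disjoint_subfamily_covering_enlargement_closedBall
    S id r R (fun x hx => hR x _ ((hball x hx).trans (by gcongr; exact Set.subset_univ _))) 4
    (by norm_num)
  simp only [id] at hdisj hcov
  have hu : u.Countable := hdisj.countable_of_nonempty_interior fun x hx =>
    ⟨x, ball_subset_interior_closedBall (mem_ball_self (hr0 x (huS hx)))⟩
  calc μ S ≤ μ (⋃ x ∈ u, closedBall x (4 * r x)) := measure_mono fun x hx => by
        obtain ⟨y, hy, hsub⟩ := hcov x hx
        exact Set.mem_biUnion hy (hsub (mem_closedBall_self (hr0 x hx).le))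
    _ ≤ ∑' x : u, μ (closedBall (x : E) (4 * r x)) := measure_biUnion_le μ hu _
    _ = ∑' x : u, 4 ^ Module.finrank ℝ E * μ (closedBall (x : E) (r x)) := tsum_congr fun x => by
        rw [Measure.addHaar_closedBall_mul μ _ (by norm_num) (hr0 x (huS x.2)).le,
          ← Measure.addHaar_closedBall_center μ (x : E), ENNReal.ofReal_pow (by norm_num),
          ENNReal.ofReal_ofNat]
    _ ≤ ∑' x : u, 4 ^ Module.finrank ℝ E * (ν (closedBall (x : E) (r x)) / c) := by
        gcongr with x
        exact hball x (huS x.2)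
    _ = 4 ^ Module.finrank ℝ E * ν (⋃ x ∈ u, closedBall x (r x)) / c := by
        rw [measure_biUnion hu hdisj fun _ _ => measurableSet_closedBall]
        simp only [div_eq_mul_inv, ENNReal.tsum_mul_left, ENNReal.tsum_mul_right, mul_assoc]
    _ ≤ 4 ^ Module.finrank ℝ E * ν Set.univ / c := by gcongr; exact Set.subset_univ _

end WeakType

lemma pow_mul_exp_neg_sq_div_four_le (m : ℕ) {s : ℝ} (hs : 1 ≤ s) :
    s ^ m * Real.exp (-s ^ 2 / 4) ≤ m ! * 4 ^ m := by
  have hexp := Real.pow_div_factorial_le_exp (s ^ 2 / 4) (by positivity) m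
  have hs_pow : s ^ m ≤ m ! * 4 ^ m * Real.exp (s ^ 2 / 4) :=
    calc s ^ m ≤ (s ^ 2) ^ m := pow_le_pow_left₀ (by linarith) (by nlinarith) m
      _ = m ! * 4 ^ m * ((s ^ 2 / 4) ^ m / m !) := by
        rw [div_pow]
        field_simp
      _ ≤ m ! * 4 ^ m * Real.exp (s ^ 2 / 4) := by gcongr
  rwa [neg_div, Real.exp_neg, ← div_eq_mul_inv, div_le_iff₀ (Real.exp_pos _)]

noncomputable def gradHeatConst (n : ℕ) : ℝ := (n + 2)! * 4 ^ (n + 2) * 2 ^ n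

lemma one_le_gradHeatConst (n : ℕ) : 1 ≤ gradHeatConst n := by
  have : (1 : ℝ) ≤ (n + 2)! := by exact_mod_cast (n + 2).factorial_pos
  unfold gradHeatConst
  bound

lemma mul_exp_neg_sq_div_four_le_dyadic (n k : ℕ) {s : ℝ} (hs : 0 ≤ s) (hsk : s ≤ 2 ^ k)
    (hk : k = 0 ∨ 2 ^ k < 2 * s) :
    s * Real.exp (-s ^ 2 / 4) ≤ 2 * gradHeatConst n / (2 ^ k) ^ (n + 1) := by
  have hexp : Real.exp (-s ^ 2 / 4) ≤ 1 := Real.exp_le_one_iff.2 (by nlinarith)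
  cases k with
  | zero =>
    have := one_le_gradHeatConst n
    simp only [pow_zero, one_pow, div_one] at hsk ⊢
    nlinarith [Real.exp_pos (-s ^ 2 / 4)]
  | succ j =>
    have hjs : 2 ^ j < s := by
      have := hk.resolve_left j.succ_ne_zero
      rw [pow_succ] at this
      linarith
    have hs1 : 1 ≤ s := (one_le_pow₀ one_le_two).trans hjs.le
    have hpow : ((2 : ℝ) ^ (j + 1)) ^ (n + 1) ≤ 2 ^ (n + 1) * s ^ (n + 1) := by
      rw [← mul_pow]
      gcongr
      rw [pow_succ]
      linarith
    have hbound := pow_mul_exp_neg_sq_div_four_le (n + 2) hs1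
    rw [le_div_iff₀ (by positivity)]
    calc s * Real.exp (-s ^ 2 / 4) * (2 ^ (j + 1)) ^ (n + 1)
        ≤ s * Real.exp (-s ^ 2 / 4) * (2 ^ (n + 1) * s ^ (n + 1)) := by gcongr
      _ = 2 ^ (n + 1) * (s ^ (n + 2) * Real.exp (-s ^ 2 / 4)) := by ring
      _ ≤ 2 ^ (n + 1) * ((n + 2)! * 4 ^ (n + 2)) := by gcongr
      _ = 2 * gradHeatConst n := by unfold gradHeatConst; ring

lemma heatKernel_le (n : ℕ) {t : ℝ} (ht : 0 < t) (x : EuclideanSpace ℝ (Fin n)) :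
    heatKernel n t x ≤ (√t ^ n)⁻¹ * Real.exp (-‖x‖ ^ 2 / (4 * t)) := by
  have h4πt : 0 < 4 * Real.pi * t := by positivity
  have hsqrt : √t ^ n ≤ √(4 * Real.pi * t) ^ n := by
    gcongr
    nlinarith [Real.pi_gt_three]
  have hrpow : (4 * Real.pi * t) ^ (-(n : ℝ) / 2) = (√(4 * Real.pi * t) ^ n)⁻¹ := by
    rw [Real.sqrt_eq_rpow, ← Real.rpow_natCast, ← Real.rpow_mul h4πt.le, ← Real.rpow_neg h4πt.le]
    ring_nf
  rw [heatKernel, hrpow]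
  exact mul_le_mul_of_nonneg_right (inv_anti₀ (by positivity) hsqrt) (Real.exp_pos _).le

lemma sqrt_mul_norm_gradHeatKernel_le (n : ℕ) {t : ℝ} (ht : 0 < t)
    (z : EuclideanSpace ℝ (Fin n)) :
    √t * ‖gradHeatKernel n t z‖
      ≤ ‖z‖ / √t * Real.exp (-(‖z‖ / √t) ^ 2 / 4) / (2 * √t ^ n) := by
  have hu : 0 < √t := Real.sqrt_pos.2 ht
  have hK : 0 ≤ heatKernel n t z := by unfold heatKernel; positivity
  have hnorm : ‖gradHeatKernel n t z‖ = ‖z‖ / (2 * t) * heatKernel n t z := by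
    rw [gradHeatKernel, norm_smul, norm_mul, norm_neg, Real.norm_of_nonneg hK,
      Real.norm_of_nonneg (by positivity)]
    ring
  have hscale : -(‖z‖ / √t) ^ 2 / 4 = -‖z‖ ^ 2 / (4 * t) := by
    rw [div_pow, Real.sq_sqrt ht.le]
    ring
  calc √t * ‖gradHeatKernel n t z‖
      ≤ √t * (‖z‖ / (2 * t) * ((√t ^ n)⁻¹ * Real.exp (-‖z‖ ^ 2 / (4 * t)))) := by
        rw [hnorm]
        gcongr
        exact heatKernel_le n ht z
    _ = _ := by
        rw [hscale]
        field_simp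
        rw [Real.sq_sqrt ht.le]
        ring

lemma sqrt_mul_norm_gradHeatKernel_le_dyadic (n : ℕ) {t : ℝ} (ht : 0 < t)
    {z : EuclideanSpace ℝ (Fin n)} {k : ℕ} (hzk : ‖z‖ ≤ 2 ^ k * √t)
    (hk : k = 0 ∨ 2 ^ k * √t < 2 * ‖z‖) :
    √t * ‖gradHeatKernel n t z‖ ≤ gradHeatConst n / (2 ^ k * (2 ^ k * √t) ^ n) := by
  have hu : 0 < √t := Real.sqrt_pos.2 ht
  have hprofile := mul_exp_neg_sq_div_four_le_dyadic n k (s := ‖z‖ / √t) (by positivity)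
    ((div_le_iff₀ hu).2 hzk) (hk.imp_right fun h => by rwa [mul_div_assoc', lt_div_iff₀ hu])
  calc √t * ‖gradHeatKernel n t z‖
      ≤ ‖z‖ / √t * Real.exp (-(‖z‖ / √t) ^ 2 / 4) / (2 * √t ^ n) :=
        sqrt_mul_norm_gradHeatKernel_le n ht z
    _ ≤ 2 * gradHeatConst n / (2 ^ k) ^ (n + 1) / (2 * √t ^ n) := by gcongr
    _ = gradHeatConst n / (2 ^ k * (2 ^ k * √t) ^ n) := by
        field_simp
        ring

noncomputable def vertHeatMaxConst (n : ℕ) : ℝ≥0∞ :=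
  2 * ENNReal.ofReal (gradHeatConst n) * volume (ball (0 : EuclideanSpace ℝ (Fin n)) 1)

lemma vertHeatMaxConst_ne_zero (n : ℕ) : vertHeatMaxConst n ≠ 0 :=
  mul_ne_zero (mul_ne_zero two_ne_zero
    (ENNReal.ofReal_pos.2 (one_pos.trans_le (one_le_gradHeatConst n))).ne')
    (measure_ball_pos _ _ one_pos).ne'

lemma vertHeatMaxConst_ne_top (n : ℕ) : vertHeatMaxConst n ≠ ∞ :=
  ENNReal.mul_ne_top (ENNReal.mul_ne_top ENNReal.ofNat_ne_top ENNReal.ofReal_ne_top)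
    measure_ball_lt_top.ne

lemma tsum_ofReal_gradHeatConst_mul_volume_closedBall (n : ℕ) (x : EuclideanSpace ℝ (Fin n))
    {u : ℝ} (hu : 0 < u) :
    ∑' k : ℕ, ENNReal.ofReal (gradHeatConst n / (2 ^ k * (2 ^ k * u) ^ n))
        * volume (closedBall x (2 ^ k * u))
      = vertHeatMaxConst n := by
  have hterm : ∀ k : ℕ, ENNReal.ofReal (gradHeatConst n / (2 ^ k * (2 ^ k * u) ^ n))
      * volume (closedBall x (2 ^ k * u))
        = ENNReal.ofReal (gradHeatConst n) * volume (ball (0 : EuclideanSpace ℝ (Fin n)) 1)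
          * 2⁻¹ ^ k := fun k => by
    have hD := one_le_gradHeatConst n
    have hscale : gradHeatConst n / (2 ^ k * (2 ^ k * u) ^ n) * (2 ^ k * u) ^ n
        = gradHeatConst n * 2⁻¹ ^ k := by
      field_simp
      rw [← mul_pow]
      norm_num
    rw [Measure.addHaar_closedBall _ _ (by positivity), finrank_euclideanSpace_fin, ← mul_assoc,
      ← ENNReal.ofReal_mul (by positivity), hscale, ENNReal.ofReal_mul (by positivity),
      ENNReal.ofReal_pow (by norm_num), ENNReal.ofReal_inv_of_pos two_pos, ENNReal.ofReal_ofNat]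
    ring
  rw [tsum_congr hterm, ENNReal.tsum_mul_left, ENNReal.tsum_geometric, ENNReal.one_sub_inv_two,
    inv_inv, vertHeatMaxConst]
  ring

lemma ofReal_sqrt_mul_norm_integral_gradHeatKernel_le (n : ℕ)
    {f : EuclideanSpace ℝ (Fin n) → ℝ} (hf : AEStronglyMeasurable f volume) {t : ℝ} (ht : 0 < t)
    (x : EuclideanSpace ℝ (Fin n)) {A : ℝ≥0∞}
    (hA : ∀ r > 0, ∫⁻ y in closedBall x r, ‖f y‖ₑ ≤ A * volume (closedBall x r)) :
    ENNReal.ofReal (√t * ‖∫ y, f y • gradHeatKernel n t (x - y)‖)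
      ≤ A * vertHeatMaxConst n := by
  have hu : 0 < √t := Real.sqrt_pos.2 ht
  have hkernel : ∀ y k, dist y x ≤ 2 ^ k * √t → (k = 0 ∨ 2 ^ k * √t < 2 * dist y x) →
      ENNReal.ofReal (√t * ‖gradHeatKernel n t (x - y)‖)
        ≤ ENNReal.ofReal (gradHeatConst n / (2 ^ k * (2 ^ k * √t) ^ n)) := by
    intro y k hyk hk
    rw [dist_comm, dist_eq_norm] at hyk hk
    exact ENNReal.ofReal_le_ofReal (sqrt_mul_norm_gradHeatKernel_le_dyadic n ht hyk hk)
  calc ENNReal.ofReal (√t * ‖∫ y, f y • gradHeatKernel n t (x - y)‖)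
      ≤ ENNReal.ofReal √t * ∫⁻ y, ‖f y • gradHeatKernel n t (x - y)‖ₑ := by
        rw [ENNReal.ofReal_mul hu.le, ofReal_norm]
        gcongr
        exact enorm_integral_le_lintegral_enorm _
    _ = ∫⁻ y, ‖f y‖ₑ * ENNReal.ofReal (√t * ‖gradHeatKernel n t (x - y)‖) := by
        rw [← lintegral_const_mul' _ _ ENNReal.ofReal_ne_top]
        refine lintegral_congr fun y => ?_
        rw [enorm_smul, ENNReal.ofReal_mul hu.le, ofReal_norm]
        ring
    _ ≤ A * ∑' k : ℕ, ENNReal.ofReal (gradHeatConst n / (2 ^ k * (2 ^ k * √t) ^ n))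
          * volume (closedBall x (2 ^ k * √t)) :=
        lintegral_mul_le_of_dyadic hf.enorm hu hkernel fun k => hA _ (by positivity)
    _ = _ := by rw [tsum_ofReal_gradHeatConst_mul_volume_closedBall n x hu]

lemma setOf_lt_vertHeatMax_subset (n : ℕ) {f : EuclideanSpace ℝ (Fin n) → ℝ}
    (hf : AEStronglyMeasurable f volume) (lam : ℝ≥0∞) :
    {x | lam < vertHeatMax n f x} ⊆ {x | ∃ r > 0, lam / vertHeatMaxConst n
      * volume (closedBall x r) < volume.withDensity (fun y => ‖f y‖ₑ) (closedBall x r)} := by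
  intro x hx
  rw [Set.mem_ofPred_eq] at hx ⊢
  obtain ⟨t, ht, hxt⟩ : ∃ t > 0,
      lam < ENNReal.ofReal (√t * ‖∫ y, f y • gradHeatKernel n t (x - y)‖) := by
    simpa only [vertHeatMax, lt_iSup_iff, exists_prop] using hx
  by_contra! hball
  refine hxt.not_ge <| (ofReal_sqrt_mul_norm_integral_gradHeatKernel_le n hf ht x
    fun r hr => ?_).trans_eq <|
      ENNReal.div_mul_cancel (vertHeatMaxConst_ne_zero n) (vertHeatMaxConst_ne_top n)
  rw [← withDensity_apply _ measurableSet_closedBall]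
  exact hball r hr

/-- The vertical heat maximal operator `M^{exp,∇}` is of weak type `(1,1)` on `ℝ^n`:
`vol{x : M^{exp,∇}f(x) > λ} ≤ C ‖f‖_{L¹} / λ`. -/
theorem stmt3 (n : ℕ) (hn : 1 ≤ n) :
    ∃ C : ℝ, 0 < C ∧
      ∀ (f : EuclideanSpace ℝ (Fin n) → ℝ), Integrable f volume →
        ∀ lam : ℝ, 0 < lam →
          volume {x | ENNReal.ofReal lam < vertHeatMax n f x}
            ≤ ENNReal.ofReal (C * (∫ y, |f y|) / lam) := by
  have : Nonempty (Fin n) := ⟨⟨0, hn⟩⟩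
  set M := vertHeatMaxConst n
  have hM0 : M ≠ 0 := vertHeatMaxConst_ne_zero n
  have hMtop : M ≠ ∞ := vertHeatMaxConst_ne_top n
  refine ⟨4 ^ n * M.toReal, by have := ENNReal.toReal_pos hM0 hMtop; positivity,
    fun f hf lam hlam => ?_⟩
  set ν := volume.withDensity fun y => ‖f y‖ₑ
  have : IsFiniteMeasure ν := isFiniteMeasure_withDensity hf.2.ne
  have hν : ν Set.univ = ENNReal.ofReal (∫ y, |f y|) := by
    rw [withDensity_apply _ MeasurableSet.univ, Measure.restrict_univ,
      ← ofReal_integral_norm_eq_lintegral_enorm hf]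
    rfl
  calc volume {x | ENNReal.ofReal lam < vertHeatMax n f x}
      ≤ 4 ^ n * ν Set.univ / (ENNReal.ofReal lam / M) := by
        refine (measure_mono (setOf_lt_vertHeatMax_subset n hf.1 _)).trans ?_
        simpa only [finrank_euclideanSpace_fin] using addHaar_setOf_exists_mul_lt_le volume ν
          (ENNReal.div_ne_zero.2 ⟨(ENNReal.ofReal_pos.2 hlam).ne', hMtop⟩)
    _ = ENNReal.ofReal (4 ^ n * M.toReal * (∫ y, |f y|) / lam) := by
        rw [ENNReal.ofReal_div_of_pos hlam, ENNReal.ofReal_mul (by positivity),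
          ENNReal.ofReal_mul (by positivity), ENNReal.ofReal_toReal hMtop, hν,
          div_eq_mul_inv _ (_ / M), ENNReal.inv_div (.inl hMtop) (.inl hM0), ← mul_div_assoc,
          ENNReal.ofReal_pow zero_le_four, ENNReal.ofReal_ofNat, mul_right_comm _ M]
end

section
/- Let n ≥ 1 be an integer and m ≥ 1 a real number. For every measurable f : ℝ^n → ℝ and every x ∈ ℝ^n, sup_{t>0} √t ‖ ∫_{ℝ^n} ( (1/Γ(m)) ∫_0^∞ e^{−s} s^{m−1} ∇K_{st}(x−y) ds ) f(y) dy ‖ ≤ (Γ(m − 1/2)/Γ(m)) · sup_{t>0} √t ‖ ∫_{ℝ^n} ∇K_t(x−y) f(y) dy ‖, whenever the inner integrals converge absolutely. -/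
open MeasureTheory Metric
open scoped ENNReal NNReal

open Set in
/-- The gradient of the subordinated (resolvent) kernel:
`(1/Γ(m)) ∫_0^∞ e^{-s} s^{m-1} ∇K_{st}(z) ds`. -/
noncomputable def resGradKernel (n : ℕ) (m t : ℝ) (z : EuclideanSpace ℝ (Fin n)) :
    EuclideanSpace ℝ (Fin n) :=
  (1 / Real.Gamma m) •
    ∫ s in Ioi (0 : ℝ), (Real.exp (-s) * s ^ (m - 1)) • gradHeatKernel n (s * t) z

lemma heatKernel_pos {n : ℕ} {t : ℝ} (ht : 0 < t) (z : EuclideanSpace ℝ (Fin n)) :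
    0 < heatKernel n t z := by
  unfold heatKernel
  have := Real.pi_pos
  positivity

lemma measurable_gradHK {n : ℕ} (t : ℝ) (x : EuclideanSpace ℝ (Fin n)) :
    Measurable fun p : EuclideanSpace ℝ (Fin n) × ℝ =>
      gradHeatKernel n (p.2 * t) (x - p.1) := by
  unfold gradHeatKernel heatKernel
  fun_prop

open Set in
lemma norm_int_eq_int_norm {n : ℕ} {m t : ℝ} (ht : 0 < t) (z : EuclideanSpace ℝ (Fin n))
    (hint : IntegrableOn
      (fun s : ℝ => (Real.exp (-s) * s ^ (m - 1)) • gradHeatKernel n (s * t) z)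
      (Ioi (0 : ℝ)) volume) :
    ‖∫ s in Ioi (0:ℝ), (Real.exp (-s) * s ^ (m - 1)) • gradHeatKernel n (s * t) z‖
      = ∫ s in Ioi (0:ℝ), ‖(Real.exp (-s) * s ^ (m - 1)) • gradHeatKernel n (s * t) z‖ := by
  rcases eq_or_ne z 0 with rfl | hz
  · simp [gradHeatKernel]
  · set φ : ℝ → ℝ := fun s =>
      (Real.exp (-s) * s ^ (m - 1)) * (-(1 / (2 * (s * t))) * heatKernel n (s * t) z) with hφ
    have hfun : ∀ s : ℝ, (Real.exp (-s) * s ^ (m - 1)) • gradHeatKernel n (s * t) z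
        = φ s • z := by
      intro s; simp [gradHeatKernel, hφ, smul_smul]
    have hφint : IntegrableOn φ (Ioi 0) volume := by
      have : IntegrableOn (fun s => φ s • z) (Ioi 0) volume := by
        refine hint.congr_fun (fun s _ => hfun s) measurableSet_Ioi
      exact (integrable_smul_const hz).mp this
    have hφnonpos : ∀ s ∈ Ioi (0:ℝ), φ s ≤ 0 := by
      intro s hs
      have hs' : (0:ℝ) < s := hs
      have hst : 0 < s * t := mul_pos hs' ht
      have hK : 0 ≤ heatKernel n (s * t) z := (heatKernel_pos hst z).le
      have hw : 0 ≤ Real.exp (-s) * s ^ (m - 1) := by positivity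
      have h2 : -(1 / (2 * (s * t))) * heatKernel n (s * t) z ≤ 0 :=
        mul_nonpos_of_nonpos_of_nonneg (neg_nonpos.mpr (by positivity)) hK
      exact mul_nonpos_of_nonneg_of_nonpos hw h2
    have hφae : ∀ᵐ s ∂(volume.restrict (Ioi (0:ℝ))), φ s ≤ 0 :=
      (ae_restrict_iff' measurableSet_Ioi).mpr (ae_of_all _ hφnonpos)
    have hIle : (∫ s in Ioi (0:ℝ), φ s) ≤ 0 := integral_nonpos_of_ae hφae
    calc ‖∫ s in Ioi (0:ℝ), (Real.exp (-s) * s ^ (m - 1)) • gradHeatKernel n (s * t) z‖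
        = ‖(∫ s in Ioi (0:ℝ), φ s) • z‖ := by
          rw [show (∫ s in Ioi (0:ℝ), (Real.exp (-s) * s ^ (m - 1)) • gradHeatKernel n (s * t) z)
              = ∫ s in Ioi (0:ℝ), φ s • z from by simp_rw [hfun]]
          rw [integral_smul_const]
      _ = |∫ s in Ioi (0:ℝ), φ s| * ‖z‖ := by rw [norm_smul, Real.norm_eq_abs]
      _ = (∫ s in Ioi (0:ℝ), -φ s) * ‖z‖ := by rw [abs_of_nonpos hIle, integral_neg]
      _ = (∫ s in Ioi (0:ℝ), |φ s|) * ‖z‖ := by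
          congr 1
          refine setIntegral_congr_fun measurableSet_Ioi (fun s hs => ?_)
          exact (abs_of_nonpos (hφnonpos s hs)).symm
      _ = ∫ s in Ioi (0:ℝ), |φ s| * ‖z‖ := by rw [integral_mul_const]
      _ = ∫ s in Ioi (0:ℝ), ‖(Real.exp (-s) * s ^ (m - 1)) • gradHeatKernel n (s * t) z‖ := by
          refine setIntegral_congr_fun measurableSet_Ioi (fun s hs => ?_)
          rw [hfun s, norm_smul, Real.norm_eq_abs]

open Set in
/-- Subordination: the resolvent-based vertical maximal function is pointwise dominated
by `Γ(m - 1/2)/Γ(m)` times the heat-semigroup vertical maximal function. -/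
theorem stmt7 (n : ℕ) (hn : 1 ≤ n) (m : ℝ) (hm : 1 ≤ m)
    (f : EuclideanSpace ℝ (Fin n) → ℝ) (hf : Measurable f)
    (x : EuclideanSpace ℝ (Fin n))
    (h1 : ∀ t : ℝ, 0 < t → ∀ z : EuclideanSpace ℝ (Fin n),
      IntegrableOn (fun s : ℝ => (Real.exp (-s) * s ^ (m - 1)) • gradHeatKernel n (s * t) z)
        (Ioi (0 : ℝ)) volume)
    (h2 : ∀ t : ℝ, 0 < t → Integrable (fun y => f y • resGradKernel n m t (x - y)) volume)
    (h3 : ∀ t : ℝ, 0 < t → Integrable (fun y => f y • gradHeatKernel n t (x - y)) volume) :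
    (⨆ (t : ℝ) (_ : 0 < t),
        ENNReal.ofReal (Real.sqrt t * ‖∫ y, f y • resGradKernel n m t (x - y)‖))
      ≤ ENNReal.ofReal (Real.Gamma (m - 1 / 2) / Real.Gamma m) *
        ⨆ (t : ℝ) (_ : 0 < t),
          ENNReal.ofReal (Real.sqrt t * ‖∫ y, f y • gradHeatKernel n t (x - y)‖) := by
  have hm0 : (0:ℝ) < m := lt_of_lt_of_le one_pos hm
  have hΓm : 0 < Real.Gamma m := Real.Gamma_pos_of_pos hm0
  have hm2 : (0:ℝ) < m - 1/2 := by linarith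
  have hΓ2 : 0 < Real.Gamma (m - 1/2) := Real.Gamma_pos_of_pos hm2
  have hc : 0 < Real.Gamma (m - 1/2) / Real.Gamma m := div_pos hΓ2 hΓm
  set M : ℝ≥0∞ := ⨆ (t : ℝ) (_ : 0 < t),
    ENNReal.ofReal (Real.sqrt t * ‖∫ y, f y • gradHeatKernel n t (x - y)‖) with hM
  by_cases hMtop : M = ⊤
  · rw [hMtop, ENNReal.mul_top (ne_of_gt (ENNReal.ofReal_pos.mpr hc))]
    exact le_top
  have hMt : ∀ τ : ℝ, 0 < τ →
      Real.sqrt τ * ‖∫ y, f y • gradHeatKernel n τ (x - y)‖ ≤ M.toReal := by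
    intro τ hτ
    have h := le_iSup₂ (f := fun (t:ℝ) (_ : 0 < t) =>
      ENNReal.ofReal (Real.sqrt t * ‖∫ y, f y • gradHeatKernel n t (x - y)‖)) τ hτ
    rw [← hM] at h
    exact (ENNReal.ofReal_le_iff_le_toReal hMtop).mp h
  refine iSup₂_le fun t ht => ?_
  set w : ℝ → ℝ := fun s => Real.exp (-s) * s ^ (m - 1) with hw
  set I : ℝ → EuclideanSpace ℝ (Fin n) :=
    fun τ => ∫ y, f y • gradHeatKernel n τ (x - y) with hI
  set F : EuclideanSpace ℝ (Fin n) → ℝ → EuclideanSpace ℝ (Fin n) :=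
    fun y s => w s • (f y • gradHeatKernel n (s * t) (x - y)) with hF
  have hFmeas : AEStronglyMeasurable (Function.uncurry F)
      (volume.prod (volume.restrict (Ioi (0:ℝ)))) := by
    apply Measurable.aestronglyMeasurable
    rw [hF]
    simp only [Function.uncurry, hw]
    unfold gradHeatKernel heatKernel
    fun_prop
  have hF1 : ∀ y, Integrable (fun s => F y s) (volume.restrict (Ioi (0:ℝ))) := by
    intro y
    have h := ((h1 t ht (x - y)).smul (f y))
    exact h.congr (ae_of_all _ fun s => smul_comm (f y) (w s) _)
  have hnormint : ∀ y, (∫ s in Ioi (0:ℝ), ‖F y s‖)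
      = Real.Gamma m * ‖f y • resGradKernel n m t (x - y)‖ := by
    intro y
    have e1 : ∀ s, ‖F y s‖ = |f y| * ‖w s • gradHeatKernel n (s * t) (x - y)‖ := by
      intro s
      simp only [hF]
      rw [smul_comm (w s) (f y), norm_smul, Real.norm_eq_abs]
    calc (∫ s in Ioi (0:ℝ), ‖F y s‖)
        = ∫ s in Ioi (0:ℝ), |f y| * ‖w s • gradHeatKernel n (s * t) (x - y)‖ := by
          simp_rw [e1]
      _ = |f y| * ∫ s in Ioi (0:ℝ), ‖w s • gradHeatKernel n (s * t) (x - y)‖ :=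
          integral_const_mul _ _
      _ = |f y| * ‖∫ s in Ioi (0:ℝ), w s • gradHeatKernel n (s * t) (x - y)‖ := by
          congr 1
          simp only [hw]
          exact (norm_int_eq_int_norm ht (x - y) (h1 t ht (x - y))).symm
      _ = |f y| * (Real.Gamma m * ‖resGradKernel n m t (x - y)‖) := by
          congr 1
          have e2 : (∫ s in Ioi (0:ℝ), w s • gradHeatKernel n (s * t) (x - y))
              = Real.Gamma m • resGradKernel n m t (x - y) := by
            simp only [resGradKernel, hw, smul_smul, mul_one_div,
              div_self (ne_of_gt hΓm), one_smul]
          rw [e2, norm_smul, Real.norm_eq_abs, abs_of_pos hΓm]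
      _ = Real.Gamma m * ‖f y • resGradKernel n m t (x - y)‖ := by
          rw [norm_smul, Real.norm_eq_abs]; ring
  have hF2 : Integrable (fun y => ∫ s in Ioi (0:ℝ), ‖F y s‖) volume := by
    have h := ((h2 t ht).norm.const_mul (Real.Gamma m))
    exact h.congr (ae_of_all _ fun y => (hnormint y).symm)
  have hFint : Integrable (Function.uncurry F)
      (volume.prod (volume.restrict (Ioi (0:ℝ)))) :=
    (integrable_prod_iff hFmeas).mpr ⟨ae_of_all _ hF1, hF2⟩
  have hIy : ∀ s : ℝ, (∫ y, F y s) = w s • I (s * t) := fun s => integral_smul _ _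
  have keyEq : (∫ y, f y • resGradKernel n m t (x - y))
      = (1 / Real.Gamma m) • ∫ s in Ioi (0:ℝ), w s • I (s * t) := by
    have e1 : ∀ y, f y • resGradKernel n m t (x - y)
        = (1 / Real.Gamma m) • ∫ s in Ioi (0:ℝ), F y s := by
      intro y
      simp only [resGradKernel]
      rw [smul_comm]
      congr 1
      rw [← integral_smul]
      refine setIntegral_congr_fun measurableSet_Ioi fun s _ => ?_
      simp only [hF, hw]
      exact smul_comm _ _ _
    calc (∫ y, f y • resGradKernel n m t (x - y))
        = ∫ y, (1 / Real.Gamma m) • ∫ s in Ioi (0:ℝ), F y s := by simp_rw [e1]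
      _ = (1 / Real.Gamma m) • ∫ y, ∫ s in Ioi (0:ℝ), F y s := integral_smul _ _
      _ = (1 / Real.Gamma m) • ∫ s in Ioi (0:ℝ), (∫ y, F y s) := by
          rw [integral_integral_swap hFint]
      _ = (1 / Real.Gamma m) • ∫ s in Ioi (0:ℝ), w s • I (s * t) := by simp_rw [hIy]
  have hIint : Integrable (fun s => w s • I (s * t)) (volume.restrict (Ioi (0:ℝ))) :=
    (hFint.integral_prod_right).congr (ae_of_all _ hIy)
  have hb : Real.sqrt t * ‖∫ y, f y • resGradKernel n m t (x - y)‖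
      ≤ (Real.Gamma (m - 1/2) / Real.Gamma m) * M.toReal := by
    rw [keyEq, norm_smul, Real.norm_eq_abs,
      abs_of_pos (by positivity : (0:ℝ) < 1 / Real.Gamma m)]
    have step2 : (∫ s in Ioi (0:ℝ), Real.sqrt t * ‖w s • I (s * t)‖)
        ≤ ∫ s in Ioi (0:ℝ), (Real.exp (-s) * s ^ (m - 1/2 - 1)) * M.toReal := by
      refine setIntegral_mono_on (hIint.norm.const_mul _)
        ((Real.GammaIntegral_convergent hm2).mul_const _) measurableSet_Ioi ?_
      intro s hs
      have hs' : (0:ℝ) < s := hs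
      have hst : 0 < s * t := mul_pos hs' ht
      have hIb : Real.sqrt (s * t) * ‖I (s * t)‖ ≤ M.toReal := hMt (s * t) hst
      have hws : 0 ≤ w s := by simp only [hw]; positivity
      rw [norm_smul, Real.norm_eq_abs, abs_of_nonneg hws]
      have hsq : Real.sqrt t = Real.sqrt (s * t) / Real.sqrt s := by
        rw [Real.sqrt_mul hs'.le, mul_div_cancel_left₀ _ (by positivity : Real.sqrt s ≠ 0)]
      have e3 : Real.sqrt t * (w s * ‖I (s * t)‖)
          = (w s / Real.sqrt s) * (Real.sqrt (s * t) * ‖I (s * t)‖) := by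
        rw [hsq]; ring
      rw [e3]
      have e4 : w s / Real.sqrt s = Real.exp (-s) * s ^ (m - 1/2 - 1) := by
        simp only [hw]
        rw [Real.sqrt_eq_rpow, mul_div_assoc, ← Real.rpow_sub hs']
        ring_nf
      rw [e4]
      exact mul_le_mul_of_nonneg_left hIb (by positivity)
    have step3 : (∫ s in Ioi (0:ℝ), (Real.exp (-s) * s ^ (m - 1/2 - 1)) * M.toReal)
        = Real.Gamma (m - 1/2) * M.toReal := by
      rw [integral_mul_const, ← Real.Gamma_eq_integral hm2]
    have hA : Real.sqrt t * ‖∫ s in Ioi (0:ℝ), w s • I (s * t)‖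
        ≤ Real.Gamma (m - 1/2) * M.toReal := by
      calc Real.sqrt t * ‖∫ s in Ioi (0:ℝ), w s • I (s * t)‖
          ≤ Real.sqrt t * ∫ s in Ioi (0:ℝ), ‖w s • I (s * t)‖ :=
            mul_le_mul_of_nonneg_left (norm_integral_le_integral_norm _) (Real.sqrt_nonneg t)
        _ = ∫ s in Ioi (0:ℝ), Real.sqrt t * ‖w s • I (s * t)‖ :=
            (integral_const_mul _ _).symm
        _ ≤ ∫ s in Ioi (0:ℝ), (Real.exp (-s) * s ^ (m - 1/2 - 1)) * M.toReal := step2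
        _ = Real.Gamma (m - 1/2) * M.toReal := step3
    calc Real.sqrt t * (1 / Real.Gamma m * ‖∫ s in Ioi (0:ℝ), w s • I (s * t)‖)
        = (1 / Real.Gamma m) * (Real.sqrt t * ‖∫ s in Ioi (0:ℝ), w s • I (s * t)‖) := by
          ring
      _ ≤ (1 / Real.Gamma m) * (Real.Gamma (m - 1/2) * M.toReal) :=
          mul_le_mul_of_nonneg_left hA (by positivity)
      _ = (Real.Gamma (m - 1/2) / Real.Gamma m) * M.toReal := by ring
  calc ENNReal.ofReal (Real.sqrt t * ‖∫ y, f y • resGradKernel n m t (x - y)‖)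
      ≤ ENNReal.ofReal ((Real.Gamma (m - 1/2) / Real.Gamma m) * M.toReal) :=
        ENNReal.ofReal_le_ofReal hb
    _ = ENNReal.ofReal (Real.Gamma (m - 1/2) / Real.Gamma m) * ENNReal.ofReal M.toReal :=
        ENNReal.ofReal_mul hc.le
    _ = ENNReal.ofReal (Real.Gamma (m - 1/2) / Real.Gamma m) * M := by
        rw [ENNReal.ofReal_toReal hMtop]
end

section
/- Let n_i, n_j ≥ 3 be integers and let p satisfy n_i/(n_i − 1) < p ≤ n_j, with p′ = p/(p−1). Then sup_{0<k≤1} k · ( ∫_{{x ∈ ℝ^{n_i} : ‖x‖ ≥ 1}} ‖x‖^{−(n_i−1)p} e^{−pk‖x‖} dx )^{1/p} · ( ∫_{{y ∈ ℝ^{n_j} : ‖y‖ ≥ 1}} ‖y‖^{−(n_j−2)p′} e^{−p′k‖y‖} dy )^{1/p′} < ∞. -/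
/-!
The first integral is bounded by its value at `k = 0`, which is finite because
`(n_i - 1) p > n_i`. For the second, passing to polar coordinates and raising the radial
exponent from `n_j - 1 - (n_j - 2) p'` to `p' - 1` (allowed exactly when `p ≤ n_j`) bounds it by
the Gamma integral `Γ(p') (p' k)^{-p'}`, whose `1/p'`-th power is `O(1/k)`.
-/

open Set MeasureTheory Metric Module Real

section Radial

variable {E : Type*} [NormedAddCommGroup E] [NormedSpace ℝ E] [FiniteDimensional ℝ E]
  [Nontrivial E] [MeasurableSpace E] [BorelSpace E] (μ : Measure E) [μ.IsAddHaarMeasure]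

theorem setIntegral_one_le_norm_eq (g : ℝ → ℝ) :
    ∫ x in {x : E | 1 ≤ ‖x‖}, g ‖x‖ ∂μ
      = (finrank ℝ E * μ.real (ball 0 1)) * ∫ r in Ici 1, r ^ (finrank ℝ E - 1) * g r := by
  have hS : MeasurableSet {x : E | 1 ≤ ‖x‖} := measurableSet_le measurable_const measurable_norm
  rw [← integral_indicator hS]
  have hind : ({x : E | 1 ≤ ‖x‖}.indicator fun x ↦ g ‖x‖) = fun x ↦ (Ici 1).indicator g ‖x‖ := by
    ext x; by_cases hx : 1 ≤ ‖x‖ <;> simp [hx]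
  have hrad : (fun r : ℝ ↦ r ^ (finrank ℝ E - 1) • (Ici 1).indicator g r)
      = (Ici 1).indicator fun r ↦ r ^ (finrank ℝ E - 1) * g r := by
    ext r; by_cases hr : 1 ≤ r <;> simp [hr]
  rw [hind, integral_fun_norm_addHaar μ, hrad, setIntegral_indicator measurableSet_Ici,
    inter_eq_right.mpr (Ici_subset_Ioi.mpr one_pos), nsmul_eq_mul, smul_eq_mul, mul_assoc]

theorem setIntegral_one_le_norm_rpow_mul_exp (s t : ℝ) :
    ∫ x in {x : E | 1 ≤ ‖x‖}, ‖x‖ ^ (-s) * exp (-(t * ‖x‖)) ∂μ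
      = (finrank ℝ E * μ.real (ball 0 1))
        * ∫ r in Ici 1, r ^ ((finrank ℝ E : ℝ) - 1 - s) * exp (-(t * r)) := by
  rw [setIntegral_one_le_norm_eq μ (fun r ↦ r ^ (-s) * exp (-(t * r)))]
  congr 1
  refine setIntegral_congr_fun measurableSet_Ici fun r (hr : 1 ≤ r) ↦ ?_
  have hcast : ((finrank ℝ E - 1 : ℕ) : ℝ) = finrank ℝ E - 1 := by
    rw [Nat.cast_sub finrank_pos, Nat.cast_one]
  rw [← rpow_natCast, hcast, ← mul_assoc, ← rpow_add (zero_lt_one.trans_le hr), sub_eq_add_neg _ s]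

theorem setIntegral_one_le_norm_rpow_mul_exp_le {s t : ℝ} (hs : finrank ℝ E < s) (ht : 0 ≤ t) :
    ∫ x in {x : E | 1 ≤ ‖x‖}, ‖x‖ ^ (-s) * exp (-(t * ‖x‖)) ∂μ
      ≤ finrank ℝ E * μ.real (ball 0 1) / (s - finrank ℝ E) := by
  have hexp : (finrank ℝ E : ℝ) - 1 - s < -1 := by linarith
  have hint : IntegrableOn (fun r : ℝ ↦ r ^ ((finrank ℝ E : ℝ) - 1 - s)) (Ici 1) :=
    (integrableOn_Ici_iff_integrableOn_Ioi (by simp)).mpr (integrableOn_Ioi_rpow_of_lt hexp one_pos)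
  have hrad : ∫ r in Ici 1, r ^ ((finrank ℝ E : ℝ) - 1 - s) * exp (-(t * r))
      ≤ ∫ r in Ici 1, r ^ ((finrank ℝ E : ℝ) - 1 - s) := by
    refine setIntegral_mono_of_nonneg (fun r (hr : 1 ≤ r) ↦ by positivity)
      (fun r (hr : 1 ≤ r) ↦ ?_) hint
    exact mul_le_of_le_one_right (by positivity) (exp_le_one_iff.mpr (by nlinarith))
  have hval : ∫ r in Ici (1 : ℝ), r ^ ((finrank ℝ E : ℝ) - 1 - s) = 1 / (s - finrank ℝ E) := by
    have hpow : (finrank ℝ E : ℝ) - 1 - s + 1 = -(s - finrank ℝ E) := by ring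
    rw [integral_Ici_eq_integral_Ioi, integral_Ioi_rpow_of_lt hexp one_pos, hpow, one_rpow,
      div_neg, neg_div, neg_neg]
  rw [setIntegral_one_le_norm_rpow_mul_exp, div_eq_mul_one_div, ← hval]
  exact mul_le_mul_of_nonneg_left hrad (mul_nonneg (Nat.cast_nonneg _) measureReal_nonneg)

theorem rpow_mul_setIntegral_one_le_norm_rpow_mul_exp_le {s t m : ℝ} (hm : 0 < m)
    (hsm : finrank ℝ E - s ≤ m) (ht : 0 < t) :
    t ^ m * ∫ x in {x : E | 1 ≤ ‖x‖}, ‖x‖ ^ (-s) * exp (-(t * ‖x‖)) ∂μ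
      ≤ finrank ℝ E * μ.real (ball 0 1) * Gamma m := by
  have hint : IntegrableOn (fun r : ℝ ↦ r ^ (m - 1) * exp (-(t * r))) (Ioi 0) := by
    simpa only [rpow_one, neg_mul] using
      integrableOn_rpow_mul_exp_neg_mul_rpow (by linarith : -1 < m - 1) one_pos ht
  have hrad : ∫ r in Ici 1, r ^ ((finrank ℝ E : ℝ) - 1 - s) * exp (-(t * r))
      ≤ ∫ r in Ioi 0, r ^ (m - 1) * exp (-(t * r)) :=
    calc ∫ r in Ici 1, r ^ ((finrank ℝ E : ℝ) - 1 - s) * exp (-(t * r))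
        ≤ ∫ r in Ici 1, r ^ (m - 1) * exp (-(t * r)) :=
          setIntegral_mono_of_nonneg (fun r (hr : 1 ≤ r) ↦ by positivity)
            (fun r (hr : 1 ≤ r) ↦ mul_le_mul_of_nonneg_right
              (rpow_le_rpow_of_exponent_le hr (by linarith)) (exp_nonneg _))
            (hint.mono_set (Ici_subset_Ioi.mpr one_pos))
      _ ≤ ∫ r in Ioi 0, r ^ (m - 1) * exp (-(t * r)) :=
          setIntegral_mono_set hint (ae_restrict_of_forall_mem measurableSet_Ioi
            fun r (hr : 0 < r) ↦ by positivity) (Ici_subset_Ioi.mpr one_pos).eventuallyLE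
  rw [integral_rpow_mul_exp_neg_mul_Ioi hm ht] at hrad
  calc t ^ m * ∫ x in {x : E | 1 ≤ ‖x‖}, ‖x‖ ^ (-s) * exp (-(t * ‖x‖)) ∂μ
      ≤ t ^ m * (finrank ℝ E * μ.real (ball 0 1) * ((1 / t) ^ m * Gamma m)) := by
        rw [setIntegral_one_le_norm_rpow_mul_exp]
        gcongr
    _ = finrank ℝ E * μ.real (ball 0 1) * Gamma m := by
        rw [div_rpow zero_le_one ht.le, one_rpow]
        field_simp

end Radial

theorem one_lt_and_lt_sub_one_mul_of_div_sub_one_lt {n p : ℝ} (hn : 1 < n)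
    (h : n / (n - 1) < p) : 1 < p ∧ n < (n - 1) * p :=
  ⟨((one_lt_div (by linarith)).mpr (by linarith)).trans h,
    by linarith [(div_lt_iff₀ (by linarith : 0 < n - 1)).mp h]⟩

theorem sub_sub_two_mul_div_sub_one_le {n p : ℝ} (hp : 1 < p) (h : p ≤ n) :
    n - (n - 2) * (p / (p - 1)) ≤ p / (p - 1) := by
  have hq : p / (p - 1) * (p - 1) = p := div_mul_cancel₀ p (by linarith)
  nlinarith

theorem mul_mul_rpow_one_div_le {k a b A B p q : ℝ} (hk : 0 < k) (hp : 0 < p) (hq : 0 < q)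
    (ha : 0 ≤ a) (hb : 0 ≤ b) (haA : a ≤ A) (hbB : (q * k) ^ q * b ≤ B) :
    k * a ^ (1 / p) * b ^ (1 / q) ≤ A ^ (1 / p) * B ^ (1 / q) / q :=
  calc k * a ^ (1 / p) * b ^ (1 / q) = a ^ (1 / p) * ((q * k) ^ q * b) ^ (1 / q) / q := by
        rw [mul_rpow (by positivity) hb, ← rpow_mul (by positivity), mul_one_div_cancel hq.ne',
          rpow_one]
        field_simp
    _ ≤ A ^ (1 / p) * B ^ (1 / q) / q := by
        gcongr
        exact rpow_nonneg (ha.trans haA) _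

theorem stmt10_general (ni nj : ℕ) (hni : 3 ≤ ni) (p : ℝ)
    (hp₁ : (ni : ℝ) / ((ni : ℝ) - 1) < p) (hp₂ : p ≤ (nj : ℝ)) :
    ∃ C : ℝ,
      ∀ k : ℝ, k ∈ Ioc (0 : ℝ) 1 →
        k * (∫ x in {x : EuclideanSpace ℝ (Fin ni) | 1 ≤ ‖x‖},
              ‖x‖ ^ (-(((ni : ℝ) - 1) * p)) * Real.exp (-(p * k * ‖x‖))) ^ (1 / p)
          * (∫ y in {y : EuclideanSpace ℝ (Fin nj) | 1 ≤ ‖y‖},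
              ‖y‖ ^ (-(((nj : ℝ) - 2) * (p / (p - 1))))
                * Real.exp (-((p / (p - 1)) * k * ‖y‖))) ^ (1 / (p / (p - 1)))
          ≤ C := by
  obtain ⟨hp, hs⟩ := one_lt_and_lt_sub_one_mul_of_div_sub_one_lt (by norm_cast; omega) hp₁
  have hsq := sub_sub_two_mul_div_sub_one_le hp hp₂
  set q := p / (p - 1)
  have hq : 0 < q := div_pos (by linarith) (by linarith)
  have : NeZero ni := ⟨by omega⟩
  have : NeZero nj := ⟨by exact_mod_cast (by linarith : (0 : ℝ) < nj).ne'⟩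
  set c₁ := ni * volume.real (ball (0 : EuclideanSpace ℝ (Fin ni)) 1)
  set c₂ := nj * volume.real (ball (0 : EuclideanSpace ℝ (Fin nj)) 1)
  refine ⟨(c₁ / (((ni : ℝ) - 1) * p - ni)) ^ (1 / p) * (c₂ * Gamma q) ^ (1 / q) / q, ?_⟩
  rintro k ⟨hk, -⟩
  refine mul_mul_rpow_one_div_le hk (by linarith) hq (integral_nonneg fun x ↦ by positivity)
    (integral_nonneg fun y ↦ by positivity) ?_ ?_
  · simpa only [finrank_euclideanSpace_fin] using
      setIntegral_one_le_norm_rpow_mul_exp_le (E := EuclideanSpace ℝ (Fin ni)) volume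
        (by simpa only [finrank_euclideanSpace_fin] using hs) (by positivity : 0 ≤ p * k)
  · simpa only [finrank_euclideanSpace_fin] using
      rpow_mul_setIntegral_one_le_norm_rpow_mul_exp_le (E := EuclideanSpace ℝ (Fin nj)) volume hq
        (by simpa only [finrank_euclideanSpace_fin] using hsq) (by positivity : 0 < q * k)

/-- The key quantitative `H₃(k)` estimate: for integers `n_i, n_j ≥ 3` and
`n_i/(n_i-1) < p ≤ n_j`, with `p' = p/(p-1)`, the quantity
`k · ‖ω₁‖_{L^p} · ‖ω₂‖_{L^{p'}}` is bounded uniformly in `0 < k ≤ 1`. -/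
theorem stmt10 (ni nj : ℕ) (hni : 3 ≤ ni) (hnj : 3 ≤ nj) (p : ℝ)
    (hp₁ : (ni : ℝ) / ((ni : ℝ) - 1) < p) (hp₂ : p ≤ (nj : ℝ)) :
    ∃ C : ℝ,
      ∀ k : ℝ, k ∈ Ioc (0 : ℝ) 1 →
        k * (∫ x in {x : EuclideanSpace ℝ (Fin ni) | 1 ≤ ‖x‖},
              ‖x‖ ^ (-(((ni : ℝ) - 1) * p)) * Real.exp (-(p * k * ‖x‖))) ^ (1 / p)
          * (∫ y in {y : EuclideanSpace ℝ (Fin nj) | 1 ≤ ‖y‖},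
              ‖y‖ ^ (-(((nj : ℝ) - 2) * (p / (p - 1))))
                * Real.exp (-((p / (p - 1)) * k * ‖y‖))) ^ (1 / (p / (p - 1)))
          ≤ C :=
  stmt10_general ni nj hni p hp₁ hp₂
end
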